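/- arXiv:1807.06832 — 2 statements merged into one kernel-verified Lean document; each statement's English description precedes it below -/
import Mathlib

section
/- Let K_n be the complete graph on n ≥ 1 vertices. Then MH^k_ℓ(K_n) = 0 whenever k ≠ ℓ, and the magnitude cohomology ring MH^*_*(K_n) is isomorphic as a graded ring to the ℤ-algebra with basis all finite sequences (x_0,…,x_k) of vertices of K_n (k ≥ 0) with consecutive entries distinct, graded by k, with product given by concatenation: (x_0,…,x_k)·(y_0,…,y_l) = (x_0,…,x_k,y_1,…,y_l) if x_k = y_0 and 0 otherwise. -/
/-! Core definitions: magnitude (co)homology of generalised metric spaces. -/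

open scoped ENNReal NNReal Classical
noncomputable section

/-- A generalised metric space (extended pseudo-quasi-metric space):
a set with a distance in `[0,∞]` satisfying `d x x = 0` and the triangle
inequality, but not necessarily symmetry or separation. -/
structure GMS (X : Type*) where
  d : X → X → ℝ≥0∞
  d_self : ∀ x, d x x = 0
  d_triangle : ∀ x y z, d x z ≤ d x y + d y z

variable {X : Type*}

/-- An extended quasi-metric space: distinct points are at nonzero distance. -/
def GMS.Quasi (M : GMS X) : Prop := ∀ x y, M.d x y = 0 → x = y

/-- Consecutive entries of the tuple are distinct, i.e. it is a simplex. -/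
def SepTuple {k : ℕ} (x : Fin (k + 1) → X) : Prop :=
  ∀ i : Fin k, x i.castSucc ≠ x i.succ

/-- The length of a tuple: the sum of consecutive distances. -/
def GMS.len (M : GMS X) {k : ℕ} (x : Fin (k + 1) → X) : ℝ≥0∞ :=
  ∑ i : Fin k, M.d (x i.castSucc) (x i.succ)

/-- A `k`-simplex of length `ℓ` in the generalised metric space `M`. -/
structure MSimplex (M : GMS X) (k : ℕ) (ℓ : ℝ≥0) where
  pts : Fin (k + 1) → X
  sep : SepTuple pts
  len_eq : M.len pts = (ℓ : ℝ≥0∞)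

/-- The magnitude chain group `MC_{k,ℓ}`: the free abelian group on the
`k`-simplices of length `ℓ`. -/
abbrev MC (M : GMS X) (k : ℕ) (ℓ : ℝ≥0) := MSimplex M k ℓ →₀ ℤ

/-- The magnitude cochain group `MC^k_ℓ = Hom(MC_{k,ℓ}, ℤ)`, identified with
the group of all `ℤ`-valued functions on `k`-simplices of length `ℓ`. -/
abbrev MCo (M : GMS X) (k : ℕ) (ℓ : ℝ≥0) := MSimplex M k ℓ → ℤ

/-- Remove the `(j+1)`-st point (an inner point) from a tuple. -/
def faceTuple {k : ℕ} (x : Fin (k + 2) → X) (j : Fin k) : Fin (k + 1) → X :=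
  x ∘ Fin.succAbove ⟨j.val + 1, by have := j.isLt; omega⟩

/-- The condition under which the inner face `∂_{j+1}` of a simplex is a simplex
of the same length: the removed point lies on a geodesic between its
neighbours (and, redundantly in quasi-metric spaces, the face is again a
simplex of the same length). -/
def GMS.FaceOK (M : GMS X) {k : ℕ} {ℓ : ℝ≥0} (s : MSimplex M (k + 1) ℓ) (j : Fin k) : Prop :=
  M.d (s.pts ⟨j.val, by have := j.isLt; omega⟩) (s.pts ⟨j.val + 2, by have := j.isLt; omega⟩) =
      M.d (s.pts ⟨j.val, by have := j.isLt; omega⟩) (s.pts ⟨j.val + 1, by have := j.isLt; omega⟩) +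
      M.d (s.pts ⟨j.val + 1, by have := j.isLt; omega⟩) (s.pts ⟨j.val + 2, by have := j.isLt; omega⟩)
    ∧ SepTuple (faceTuple s.pts j) ∧ M.len (faceTuple s.pts j) = (ℓ : ℝ≥0∞)

/-- The inner face `∂_{j+1}` of a simplex, when defined. -/
def GMS.face (M : GMS X) {k : ℕ} {ℓ : ℝ≥0} (s : MSimplex M (k + 1) ℓ) (j : Fin k)
    (h : M.FaceOK s j) : MSimplex M k ℓ :=
  ⟨faceTuple s.pts j, h.2.1, h.2.2⟩

/-- The magnitude coboundary `∂^* : MC^k_ℓ → MC^{k+1}_ℓ`, dual to the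
differential `∂ = -∂_1 + ∂_2 - ⋯ + (-1)^k ∂_k`. -/
def MCoDelta (M : GMS X) (k : ℕ) (ℓ : ℝ≥0) : MCo M k ℓ →ₗ[ℤ] MCo M (k + 1) ℓ where
  toFun φ := fun s => ∑ j : Fin k, (-1 : ℤ) ^ (j.val + 1) *
      (if h : M.FaceOK s j then φ (M.face s j h) else 0)
  map_add' φ ψ := by
    funext s
    simp only [Pi.add_apply]
    rw [← Finset.sum_add_distrib]
    refine Finset.sum_congr rfl fun j _ => ?_
    split <;> ring
  map_smul' z φ := by
    funext s
    simp only [Pi.smul_apply, smul_eq_mul, RingHom.id_apply]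
    rw [Finset.mul_sum]
    refine Finset.sum_congr rfl fun j _ => ?_
    split <;> ring

/-- Magnitude cocycles in bidegree `(k, ℓ)`. -/
def MCocycle (M : GMS X) (k : ℕ) (ℓ : ℝ≥0) : Submodule ℤ (MCo M k ℓ) :=
  LinearMap.ker (MCoDelta M k ℓ)

/-- Magnitude coboundaries in bidegree `(k, ℓ)` (zero in degree `0`). -/
def MCobound (M : GMS X) : (k : ℕ) → (ℓ : ℝ≥0) → Submodule ℤ (MCo M k ℓ)
  | 0, _ => ⊥
  | (k + 1), ℓ => LinearMap.range (MCoDelta M k ℓ)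

/-- The magnitude cohomology group `MH^k_ℓ(X)`: cocycles modulo coboundaries. -/
abbrev MagCohomology (M : GMS X) (k : ℕ) (ℓ : ℝ≥0) :=
  MCocycle M k ℓ ⧸ (MCobound M k ℓ).comap (MCocycle M k ℓ).subtype

/-- The cohomology class of a cochain (zero if it is not a cocycle). -/
def cohClass (M : GMS X) {k : ℕ} {ℓ : ℝ≥0} (φ : MCo M k ℓ) : MagCohomology M k ℓ :=
  if h : φ ∈ MCocycle M k ℓ then Submodule.Quotient.mk ⟨φ, h⟩ else 0

/-- A representative cocycle of a magnitude cohomology class. -/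
def MHout (M : GMS X) {k : ℕ} {ℓ : ℝ≥0} (α : MagCohomology M k ℓ) : MCo M k ℓ :=
  ((Submodule.Quotient.mk_surjective _) α).choose.val

/-- The first `j+1` points of a `(j+k)`-simplex. -/
def frontT (j k : ℕ) (x : Fin (j + k + 1) → X) : Fin (j + 1) → X :=
  fun i => x ⟨i.val, by have := i.isLt; omega⟩

/-- The last `k+1` points of a `(j+k)`-simplex. -/
def backT (j k : ℕ) (x : Fin (j + k + 1) → X) : Fin (k + 1) → X :=
  fun i => x ⟨j + i.val, by have := i.isLt; omega⟩

lemma SepTuple.front {j k : ℕ} {x : Fin (j + k + 1) → X} (h : SepTuple x) :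
    SepTuple (frontT j k x) := by
  intro i
  have hi := i.isLt
  exact h ⟨i.val, by omega⟩

lemma SepTuple.back {j k : ℕ} {x : Fin (j + k + 1) → X} (h : SepTuple x) :
    SepTuple (backT j k x) := by
  intro i
  have hi := i.isLt
  exact h ⟨j + i.val, by omega⟩

/-- The product of magnitude cochains:
`(φ·ψ)(x_0,…,x_{j+k}) = φ(x_0,…,x_j) · ψ(x_j,…,x_{j+k})`,
where a cochain of length-degree `ℓ` vanishes on simplices of other lengths. -/
def MCup (M : GMS X) {j k : ℕ} {ℓ m : ℝ≥0} (φ : MCo M j ℓ) (ψ : MCo M k m) :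
    MCo M (j + k) (ℓ + m) :=
  fun s =>
    if h : M.len (frontT j k s.pts) = (ℓ : ℝ≥0∞) ∧ M.len (backT j k s.pts) = (m : ℝ≥0∞) then
      φ ⟨frontT j k s.pts, s.sep.front, h.1⟩ * ψ ⟨backT j k s.pts, s.sep.back, h.2⟩
    else 0

/-- The unit cochain `u ∈ MC^0_0`, with `u(x_0) = 1`. -/
def MCoUnit (M : GMS X) : MCo M 0 0 := fun _ => 1

/-- Transport of magnitude cohomology classes along equalities of bidegrees. -/
def MHcast (M : GMS X) {k k' : ℕ} {ℓ ℓ' : ℝ≥0} (hk : k = k') (hl : ℓ = ℓ')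
    (α : MagCohomology M k ℓ) : MagCohomology M k' ℓ' := hk ▸ hl ▸ α

/-- Transport of magnitude cochains along equalities of bidegrees. -/
def MCoCast (M : GMS X) {k k' : ℕ} {ℓ ℓ' : ℝ≥0} (hk : k = k') (hl : ℓ = ℓ')
    (φ : MCo M k ℓ) : MCo M k' ℓ' := hk ▸ hl ▸ φ

/-- The product on magnitude cohomology induced by the product of cochains. -/
def MHmul (M : GMS X) {j k : ℕ} {ℓ m : ℝ≥0} (α : MagCohomology M j ℓ)
    (β : MagCohomology M k m) : MagCohomology M (j + k) (ℓ + m) :=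
  cohClass M (MCup M (MHout M α) (MHout M β))

/-- The unit of the magnitude cohomology ring. -/
def MHone (M : GMS X) : MagCohomology M 0 0 := cohClass M (MCoUnit M)

/-- Two points are adjacent: their distance is nonzero and finite, and no
third point lies strictly between them. -/
def GMS.Adjacent (M : GMS X) (x y : X) : Prop :=
  M.d x y ≠ 0 ∧ M.d x y ≠ ∞ ∧ ∀ a, M.d x y = M.d x a + M.d a y → a = x ∨ a = y

/-- An isomorphism of magnitude cohomology rings: a family of additive
isomorphisms respecting both gradings, the product, and the unit. -/
def MHRingIso {Y : Type*} (M : GMS X) (M' : GMS Y) : Prop :=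
  ∃ e : ∀ (k : ℕ) (ℓ : ℝ≥0), MagCohomology M k ℓ ≃+ MagCohomology M' k ℓ,
    (e 0 0 (MHone M) = MHone M') ∧
    ∀ (j k : ℕ) (ℓ m : ℝ≥0) (α : MagCohomology M j ℓ) (β : MagCohomology M k m),
      e (j + k) (ℓ + m) (MHmul M α β) = MHmul M' (e j ℓ α) (e k m β)


/-- A (simple, undirected) graph regarded as a generalised metric space via
the shortest-path metric on its vertex set (`d(x,y) = ∞` for vertices in
different components). -/
def SimpleGraph.toGMS {V : Type*} (G : SimpleGraph V) : GMS V where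
  d x y := (G.edist x y : ℝ≥0∞)
  d_self x := by simp [SimpleGraph.edist_self]
  d_triangle x y z := by
    rw [← ENat.toENNReal_add]
    exact ENat.toENNReal_le.mpr (G.edist_triangle)

section Glue
variable {V : Type*}

/-- Concatenation of two tuples overlapping in one point. -/
def glueT (j k : ℕ) (x : Fin (j + 1) → V) (y : Fin (k + 1) → V) : Fin (j + k + 1) → V :=
  fun i => if h : i.val ≤ j then x ⟨i.val, by omega⟩
    else y ⟨i.val - j, by have := i.isLt; omega⟩

lemma glue_rel {j k : ℕ} {R : V → V → Prop} {x : Fin (j + 1) → V} {y : Fin (k + 1) → V}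
    (hx : ∀ i : Fin j, R (x i.castSucc) (x i.succ))
    (hy : ∀ i : Fin k, R (y i.castSucc) (y i.succ))
    (hmatch : x (Fin.last j) = y 0) :
    ∀ i : Fin (j + k), R (glueT j k x y i.castSucc) (glueT j k x y i.succ) := by
  intro i
  have hi := i.isLt
  simp only [glueT, Fin.coe_castSucc, Fin.val_succ]
  by_cases h1 : i.val + 1 ≤ j
  · rw [dif_pos (by omega : i.val ≤ j), dif_pos h1]
    exact hx ⟨i.val, by omega⟩
  · by_cases h0 : i.val ≤ j
    · have hij : i.val = j := by omega
      rw [dif_pos h0, dif_neg h1]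
      have e1 : (⟨i.val, by omega⟩ : Fin (j + 1)) = Fin.last j := by
        apply Fin.ext; simpa using hij
      have e2 : (⟨i.val + 1 - j, by omega⟩ : Fin (k + 1)) =
          (⟨0, by omega⟩ : Fin k).succ := by
        apply Fin.ext; simp; omega
      rw [e1, hmatch, e2]
      have e3 : (0 : Fin (k + 1)) = (⟨0, by omega⟩ : Fin k).castSucc := by
        apply Fin.ext; simp
      rw [e3]
      exact hy ⟨0, by omega⟩
    · rw [dif_neg h0, dif_neg (by omega)]
      have e1 : (⟨i.val - j, by omega⟩ : Fin (k + 1)) =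
          (⟨i.val - j, by omega⟩ : Fin k).castSucc := by
        apply Fin.ext; simp
      have e2 : (⟨i.val + 1 - j, by omega⟩ : Fin (k + 1)) =
          (⟨i.val - j, by omega⟩ : Fin k).succ := by
        apply Fin.ext; simp; omega
      rw [e1, e2]
      exact hy _

end Glue

section PathAlgebra
variable {V : Type*} [Fintype V] [DecidableEq V]

/-- An edge path of length `k` in a graph: a sequence of vertices in which
each consecutive pair spans an edge. -/
structure EdgePath (G : SimpleGraph V) (k : ℕ) where
  pts : Fin (k + 1) → V
  adj : ∀ i : Fin k, G.Adj (pts i.castSucc) (pts i.succ)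

instance {G : SimpleGraph V} {k : ℕ} : Fintype (EdgePath G k) :=
  Fintype.ofInjective (fun p => p.pts) (by
    intro p q h; cases p; cases q; simpa using h)

/-- The degree-`k` component of the path algebra of `G`: the free abelian
group on edge paths of length `k`. -/
abbrev PathAlgComp (G : SimpleGraph V) (k : ℕ) := EdgePath G k →₀ ℤ

/-- Concatenation of edge paths sharing an endpoint. -/
def pconcat {G : SimpleGraph V} {j k : ℕ} (p : EdgePath G j) (q : EdgePath G k)
    (h : p.pts (Fin.last j) = q.pts 0) : EdgePath G (j + k) :=
  ⟨glueT j k p.pts q.pts, glue_rel p.adj q.adj h⟩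

/-- The product of the path algebra: bilinear extension of concatenation
(zero when endpoints do not match). -/
def pmul {G : SimpleGraph V} {j k : ℕ} (a : PathAlgComp G j) (b : PathAlgComp G k) :
    PathAlgComp G (j + k) :=
  a.sum fun p zp => b.sum fun q zq =>
    if h : p.pts (Fin.last j) = q.pts 0 then Finsupp.single (pconcat p q h) (zp * zq)
    else 0

/-- Transport of path algebra elements along equalities of degrees. -/
def pcast {G : SimpleGraph V} {j j' : ℕ} (h : j = j') (a : PathAlgComp G j) :
    PathAlgComp G j' := h ▸ a

/-- The trivial edge path at a vertex. -/
def trivPath (G : SimpleGraph V) (v : V) : EdgePath G 0 :=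
  ⟨fun _ => v, fun i => i.elim0⟩

/-- The relation element `Σ_{y : x ∼ y ∼ z} xyz` of the path algebra,
for a pair of vertices `x, z` (at distance 2). -/
def relElt (G : SimpleGraph V) (x z : V) : PathAlgComp G 2 :=
  ∑ p ∈ Finset.univ.filter (fun p : EdgePath G 2 => p.pts 0 = x ∧ p.pts 2 = z),
    Finsupp.single p (1 : ℤ)

/-- The degree-`k` part of the two-sided ideal of the path algebra generated
by the elements `Σ_{y : x ∼ y ∼ z} xyz` over pairs `x, z` with `d(x,z) = 2`. -/
def RelIdealComp (G : SimpleGraph V) (k : ℕ) : Submodule ℤ (PathAlgComp G k) :=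
  Submodule.span ℤ {w | ∃ (a b : ℕ) (h : a + 2 + b = k) (p : EdgePath G a) (x z : V)
    (_ : G.edist x z = 2) (q : EdgePath G b),
      w = pcast h (pmul (pmul (Finsupp.single p (1 : ℤ)) (relElt G x z))
        (Finsupp.single q (1 : ℤ)))}

/-- The degree-`k` component of the quotient of the path algebra of `G` by the
ideal generated by the elements `Σ_{y : x ∼ y ∼ z} xyz`. -/
abbrev PathQuot (G : SimpleGraph V) (k : ℕ) := PathAlgComp G k ⧸ RelIdealComp G k

/-- A representative of a class in the quotient of the path algebra. -/
def pqout {G : SimpleGraph V} {k : ℕ} (u : PathQuot G k) : PathAlgComp G k :=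
  ((Submodule.Quotient.mk_surjective _) u).choose

/-- The product on the quotient of the path algebra. -/
def pqmul {G : SimpleGraph V} {j k : ℕ} (u : PathQuot G j) (v : PathQuot G k) :
    PathQuot G (j + k) :=
  Submodule.Quotient.mk (pmul (pqout u) (pqout v))

end PathAlgebra


section CompleteGraph
variable {V : Type*}

/-- The free abelian group on sequences of `k+1` vertices with consecutive
entries distinct. -/
abbrev SeqComp (V : Type*) (k : ℕ) := {x : Fin (k + 1) → V // SepTuple x} →₀ ℤ

/-- Concatenation product on sequences with consecutive entries distinct:
`(x_0,…,x_j)·(y_0,…,y_l) = (x_0,…,x_j,y_1,…,y_l)` if `x_j = y_0`, else `0`. -/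
def seqMul {j k : ℕ} (a : SeqComp V j) (b : SeqComp V k) : SeqComp V (j + k) :=
  a.sum fun p zp => b.sum fun q zq =>
    if h : p.val (Fin.last j) = q.val 0 then
      Finsupp.single ⟨glueT j k p.val q.val, glue_rel p.prop q.prop h⟩ (zp * zq)
    else 0

/-! If distinct points are at distance `1`, as in a complete graph, a `k`-simplex has length
exactly `k`. An inner face of a simplex is then never of the same length, so the differential
vanishes and `MH^k_ℓ` is the group of all `ℤ`-valued functions on `k`-simplices of length `ℓ`:
zero unless `ℓ = k`, and for `ℓ = k` (on a finite vertex set) the free abelian group on tuples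
with consecutive entries distinct. The cup product `φ·ψ` evaluates `φ` on the front and `ψ` on
the back of a tuple, and these form the only pair of tuples whose concatenation is the given
one; this is exactly the concatenation product written on the dual basis. -/

def GMS.IsDiscrete (M : GMS X) : Prop := ∀ x y, x ≠ y → M.d x y = 1

theorem SimpleGraph.top_toGMS_isDiscrete : (⊤ : SimpleGraph V).toGMS.IsDiscrete := by
  intro x y hxy
  change ((⊤ : SimpleGraph V).edist x y : ℝ≥0∞) = 1
  rw [SimpleGraph.edist_eq_one_iff_adj.mpr hxy, ENat.toENNReal_one]

section FrontBack

variable {j k : ℕ}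

theorem glueT_frontT_backT (x : Fin (j + k + 1) → X) :
    glueT j k (frontT j k x) (backT j k x) = x := by
  funext i
  simp only [glueT, frontT, backT]
  split
  · rfl
  · exact congrArg x (Fin.ext (by simp only; omega))

theorem frontT_glueT (p : Fin (j + 1) → X) (q : Fin (k + 1) → X) :
    frontT j k (glueT j k p q) = p := by
  funext i
  simp only [frontT, glueT, dif_pos (Nat.lt_succ_iff.mp i.isLt)]

theorem backT_glueT {p : Fin (j + 1) → X} {q : Fin (k + 1) → X} (h : p (Fin.last j) = q 0) :
    backT j k (glueT j k p q) = q := by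
  funext i
  simp only [backT, glueT]
  split
  · obtain rfl : i = 0 := Fin.ext (by simp only [Fin.val_zero]; omega)
    exact (congrArg p (Fin.ext (by simp))).trans h
  · exact congrArg q (Fin.ext (by simp))

theorem glueT_eq_iff {p : Fin (j + 1) → X} {q : Fin (k + 1) → X} (h : p (Fin.last j) = q 0)
    (x : Fin (j + k + 1) → X) :
    glueT j k p q = x ↔ p = frontT j k x ∧ q = backT j k x := by
  constructor
  · rintro rfl
    exact ⟨(frontT_glueT p q).symm, (backT_glueT h).symm⟩
  · rintro ⟨rfl, rfl⟩
    exact glueT_frontT_backT x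

theorem GMS.len_eq_len_frontT_add_len_backT (M : GMS X) (x : Fin (j + k + 1) → X) :
    M.len x = M.len (frontT j k x) + M.len (backT j k x) := by
  simp only [GMS.len, Fin.sum_univ_add]
  rfl

end FrontBack

theorem seqMul_apply {j k : ℕ} (a : SeqComp X j) (b : SeqComp X k)
    (x : {x : Fin (j + k + 1) → X // SepTuple x}) :
    seqMul a b x = a ⟨frontT j k x.1, x.2.front⟩ * b ⟨backT j k x.1, x.2.back⟩ := by
  set p₀ : {p : Fin (j + 1) → X // SepTuple p} := ⟨frontT j k x.1, x.2.front⟩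
  set q₀ : {q : Fin (k + 1) → X // SepTuple q} := ⟨backT j k x.1, x.2.back⟩
  have term : ∀ p q (z : ℤ),
      (if h : p.1 (Fin.last j) = q.1 0 then
        Finsupp.single ⟨glueT j k p.1 q.1, glue_rel p.2 q.2 h⟩ z else 0) x =
        if p = p₀ ∧ q = q₀ then z else 0 := by
    intro p q z
    split_ifs with h hpq hpq
    · obtain ⟨rfl, rfl⟩ := hpq
      have hx : (⟨glueT j k p₀.1 q₀.1, glue_rel p₀.2 q₀.2 h⟩ : {x // SepTuple x}) = x :=
        Subtype.ext (glueT_frontT_backT x.1)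
      rw [hx, Finsupp.single_eq_same]
    · refine Finsupp.single_eq_of_ne' fun hx => hpq ?_
      obtain ⟨hp, hq⟩ := (glueT_eq_iff h x.1).mp (congrArg Subtype.val hx)
      exact ⟨Subtype.ext hp, Subtype.ext hq⟩
    · exact absurd (hpq.1 ▸ hpq.2 ▸ rfl) h
    · rfl
  simp only [seqMul, Finsupp.sum_apply, term]
  rw [Finsupp.sum_eq_single p₀ (fun p _ hp => by simp [hp]) (by simp),
    Finsupp.sum_eq_single q₀ (fun q _ hq => by simp [hq]) (by simp), if_pos ⟨rfl, rfl⟩]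

section Cochains

variable [Finite X] (M : GMS X)

/-- Extension by zero of a cochain from the simplices of length `ℓ` to all tuples with
consecutive entries distinct. -/
def cochainToSeq (k : ℕ) (ℓ : ℝ≥0) : MCo M k ℓ →ₗ[ℤ] SeqComp X k :=
  (Finsupp.linearEquivFunOnFinite ℤ ℤ _).symm.toLinearMap ∘ₗ
    LinearMap.pi fun x => if h : M.len x.1 = ℓ then LinearMap.proj ⟨x.1, x.2, h⟩ else 0

variable {M}

theorem cochainToSeq_apply {k : ℕ} {ℓ : ℝ≥0} (φ : MCo M k ℓ)
    (x : {x : Fin (k + 1) → X // SepTuple x}) :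
    cochainToSeq M k ℓ φ x = if h : M.len x.1 = ℓ then φ ⟨x.1, x.2, h⟩ else 0 := by
  simp only [cochainToSeq, LinearMap.coe_comp, LinearEquiv.coe_coe, Function.comp_apply,
    Finsupp.linearEquivFunOnFinite_symm_apply, LinearMap.pi_apply]
  split <;> rfl

theorem cochainToSeq_apply_simplex {k : ℕ} {ℓ : ℝ≥0} (φ : MCo M k ℓ) (s : MSimplex M k ℓ) :
    cochainToSeq M k ℓ φ ⟨s.pts, s.sep⟩ = φ s := by
  rw [cochainToSeq_apply, dif_pos s.len_eq]

theorem cochainToSeq_injective (k : ℕ) (ℓ : ℝ≥0) : Function.Injective (cochainToSeq M k ℓ) :=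
  fun φ ψ h => funext fun s => by
    rw [← cochainToSeq_apply_simplex φ, ← cochainToSeq_apply_simplex ψ, h]

theorem cochainToSeq_cup {j k : ℕ} {ℓ m : ℝ≥0} (φ : MCo M j ℓ) (ψ : MCo M k m) :
    cochainToSeq M (j + k) (ℓ + m) (MCup M φ ψ) =
      seqMul (cochainToSeq M j ℓ φ) (cochainToSeq M k m ψ) := by
  ext x
  rw [seqMul_apply, cochainToSeq_apply, cochainToSeq_apply, cochainToSeq_apply]
  by_cases hlen : M.len (frontT j k x.1) = ℓ ∧ M.len (backT j k x.1) = m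
  · have hx : M.len x.1 = ↑(ℓ + m) := by
      rw [M.len_eq_len_frontT_add_len_backT, hlen.1, hlen.2, ENNReal.coe_add]
    rw [dif_pos hx, dif_pos hlen.1, dif_pos hlen.2]
    exact dif_pos hlen
  · have hcup : ∀ h, MCup M φ ψ ⟨x.1, x.2, h⟩ = 0 := fun _ => dif_neg hlen
    rw [dite_eq_right_iff.mpr hcup]
    rcases not_and_or.mp hlen with hf | hb
    · simp [hf]
    · simp [hb]

end Cochains

theorem cochainToSeq_unit [Fintype X] (M : GMS X) :
    cochainToSeq M 0 0 (MCoUnit M) =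
      ∑ v : X, Finsupp.single ⟨fun _ => v, fun i => i.elim0⟩ (1 : ℤ) := by
  ext x
  have key : ∀ v : X,
      (⟨fun _ => v, fun i => i.elim0⟩ : {x : Fin 1 → X // SepTuple x}) = x ↔ x.1 0 = v := by
    intro v
    rw [Subtype.ext_iff, funext_iff, Fin.forall_fin_one]
    exact eq_comm
  rw [cochainToSeq_apply, dif_pos (by simp [GMS.len]), Finsupp.finsetSum_apply]
  simp [Finsupp.single_apply, key, MCoUnit]

namespace GMS.IsDiscrete

variable {M : GMS X}

theorem len_eq (hM : M.IsDiscrete) {k : ℕ} {x : Fin (k + 1) → X} (hx : SepTuple x) :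
    M.len x = k := by
  simp [GMS.len, hM _ _ (hx _)]

theorem len_eq_of_simplex (hM : M.IsDiscrete) {k : ℕ} {ℓ : ℝ≥0} (s : MSimplex M k ℓ) :
    ℓ = k := by
  have h := s.len_eq
  rw [hM.len_eq s.sep] at h
  exact_mod_cast h.symm

/-- An inner face has one step fewer, hence length `k` instead of `k + 1`. -/
theorem not_faceOK (hM : M.IsDiscrete) {k : ℕ} {ℓ : ℝ≥0} (s : MSimplex M (k + 1) ℓ)
    (j : Fin k) : ¬ M.FaceOK s j := by
  rintro ⟨-, hsep, hlen⟩
  rw [hM.len_eq hsep, hM.len_eq_of_simplex s] at hlen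
  exact k.succ_ne_self (by exact_mod_cast hlen.symm)

theorem MCoDelta_eq_zero (hM : M.IsDiscrete) (k : ℕ) (ℓ : ℝ≥0) : MCoDelta M k ℓ = 0 := by
  ext φ s
  simp [MCoDelta, hM.not_faceOK s]

theorem MCocycle_eq_top (hM : M.IsDiscrete) (k : ℕ) (ℓ : ℝ≥0) : MCocycle M k ℓ = ⊤ := by
  rw [MCocycle, hM.MCoDelta_eq_zero, LinearMap.ker_zero]

theorem MCobound_eq_bot (hM : M.IsDiscrete) : ∀ (k : ℕ) (ℓ : ℝ≥0), MCobound M k ℓ = ⊥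
  | 0, _ => rfl
  | k + 1, ℓ => by rw [MCobound, hM.MCoDelta_eq_zero, LinearMap.range_zero]

def cohomologyEquiv (hM : M.IsDiscrete) (k : ℕ) (ℓ : ℝ≥0) :
    MagCohomology M k ℓ ≃ₗ[ℤ] MCo M k ℓ :=
  (Submodule.quotEquivOfEqBot _ (by
    rw [hM.MCobound_eq_bot, Submodule.comap_bot, Submodule.ker_subtype])).trans
    (LinearEquiv.ofTop _ (hM.MCocycle_eq_top k ℓ))

theorem cohomologyEquiv_apply (hM : M.IsDiscrete) {k : ℕ} {ℓ : ℝ≥0}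
    (α : MagCohomology M k ℓ) : hM.cohomologyEquiv k ℓ α = MHout M α := by
  conv_lhs => rw [← (Submodule.Quotient.mk_surjective _ α).choose_spec]
  rfl

theorem cohomologyEquiv_cohClass (hM : M.IsDiscrete) {k : ℕ} {ℓ : ℝ≥0} (φ : MCo M k ℓ) :
    hM.cohomologyEquiv k ℓ (cohClass M φ) = φ := by
  rw [cohClass, dif_pos (hM.MCocycle_eq_top k ℓ ▸ Submodule.mem_top)]
  rfl

theorem magCohomology_eq_zero (hM : M.IsDiscrete) {k : ℕ} {ℓ : ℝ≥0} (h : (k : ℝ≥0) ≠ ℓ)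
    (α : MagCohomology M k ℓ) : α = 0 := by
  have : IsEmpty (MSimplex M k ℓ) := ⟨fun s => h (hM.len_eq_of_simplex s).symm⟩
  exact (hM.cohomologyEquiv k ℓ).injective (Subsingleton.elim _ _)

variable [Finite X]

theorem cochainToSeq_surjective (hM : M.IsDiscrete) (k : ℕ) :
    Function.Surjective (cochainToSeq M k k) := by
  intro a
  refine ⟨fun s => a ⟨s.pts, s.sep⟩, Finsupp.ext fun x => ?_⟩
  rw [cochainToSeq_apply, dif_pos (by rw [hM.len_eq x.2, ENNReal.coe_natCast])]

def seqEquiv (hM : M.IsDiscrete) (k : ℕ) : MagCohomology M k k ≃ₗ[ℤ] SeqComp X k :=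
  (hM.cohomologyEquiv k k).trans
    (LinearEquiv.ofBijective _ ⟨cochainToSeq_injective k k, hM.cochainToSeq_surjective k⟩)

theorem seqEquiv_apply (hM : M.IsDiscrete) {k : ℕ} (α : MagCohomology M k k) :
    hM.seqEquiv k α = cochainToSeq M k k (MHout M α) := by
  rw [seqEquiv, LinearEquiv.trans_apply, cohomologyEquiv_apply]
  rfl

theorem seqEquiv_MHcast (hM : M.IsDiscrete) {k : ℕ} {ℓ : ℝ≥0} (h : ℓ = k)
    (α : MagCohomology M k ℓ) :
    hM.seqEquiv k (MHcast M rfl h α) = cochainToSeq M k ℓ (hM.cohomologyEquiv k ℓ α) := by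
  subst h
  rfl

end GMS.IsDiscrete

/-- **Magnitude cohomology of complete graphs.** For the complete graph on a
nonempty finite vertex set, the magnitude cohomology vanishes off the
diagonal, and the magnitude cohomology ring is isomorphic as a graded ring to
the `ℤ`-algebra with basis all finite sequences of vertices with consecutive
entries distinct, with concatenation product. -/
theorem complete_graph_magnitude_cohomology [Fintype V] :
    (∀ (k : ℕ) (ℓ : ℝ≥0), (k : ℝ≥0) ≠ ℓ →
      ∀ α : MagCohomology (⊤ : SimpleGraph V).toGMS k ℓ, α = 0) ∧
    ∃ e : ∀ k : ℕ, MagCohomology (⊤ : SimpleGraph V).toGMS k (k : ℝ≥0) ≃+ SeqComp V k,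
      (e 0 (MHcast (⊤ : SimpleGraph V).toGMS rfl (by norm_num)
          (MHone (⊤ : SimpleGraph V).toGMS)) =
        ∑ v : V, Finsupp.single ⟨fun _ => v, fun i => i.elim0⟩ (1 : ℤ)) ∧
      ∀ (j k : ℕ) (α : MagCohomology (⊤ : SimpleGraph V).toGMS j (j : ℝ≥0))
        (β : MagCohomology (⊤ : SimpleGraph V).toGMS k (k : ℝ≥0)),
        e (j + k) (MHcast (⊤ : SimpleGraph V).toGMS rfl (Nat.cast_add j k).symm
            (MHmul (⊤ : SimpleGraph V).toGMS α β)) =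
          seqMul (e j α) (e k β) := by
  have hM := SimpleGraph.top_toGMS_isDiscrete (V := V)
  refine ⟨fun k ℓ h => hM.magCohomology_eq_zero h,
    fun k => (hM.seqEquiv k).toAddEquiv, ?unit, fun j k α β => ?mul⟩
  case unit =>
    change hM.seqEquiv 0 _ = _
    rw [hM.seqEquiv_MHcast, MHone, hM.cohomologyEquiv_cohClass, cochainToSeq_unit]
  case mul =>
    change hM.seqEquiv (j + k) _ = seqMul (hM.seqEquiv j α) (hM.seqEquiv k β)
    rw [hM.seqEquiv_MHcast, MHmul, hM.cohomologyEquiv_cohClass, cochainToSeq_cup,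
      hM.seqEquiv_apply, hM.seqEquiv_apply]

end CompleteGraph

end
end

section
/- Let A be a symmetric monoidal abelian category whose tensor product is additive in each variable, and let U and V be simplicial objects in A. Then the square comparing the Alexander–Whitney maps of U ⊗ V and V ⊗ U via the braidings commutes up to chain homotopy: the composite of AW_{U,V} : C_*(U ⊗ V) → C_*(U) ⊗ C_*(V) with the braiding (with Koszul signs) C_*(U) ⊗ C_*(V) → C_*(V) ⊗ C_*(U) is chain homotopic to the composite of C_*(τ) : C_*(U ⊗ V) → C_*(V ⊗ U) (induced by the levelwise braiding τ) with AW_{V,U} : C_*(V ⊗ U) → C_*(V) ⊗ C_*(U). -/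
/-! Statement: the square comparing the Alexander–Whitney maps of `U ⊗ V` and
`V ⊗ U` via the braidings commutes up to chain homotopy.  Everything is
expressed componentwise: a map into the tensor product of chain complexes is
recorded by its components into the bidegree-`(p,q)` summands. -/

open CategoryTheory MonoidalCategory
open AlgebraicTopology.AlternatingFaceMapComplex

noncomputable section

variable {A : Type*} [Category A] [Abelian A] [MonoidalCategory A]
  [SymmetricCategory A] [MonoidalPreadditive A]

/-- The object of `A` in simplicial degree `n`. -/
abbrev ob (U : CategoryTheory.SimplicialObject A) (n : ℕ) : A :=
  U.obj (Opposite.op (SimplexCategory.mk n))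

/-- The levelwise tensor product of two simplicial objects. -/
abbrev tensS (U V : CategoryTheory.SimplicialObject A) : CategoryTheory.SimplicialObject A :=
  (U ⊗ V : SimplexCategoryᵒᵖ ⥤ A)

/-- The iterated top face map `d_{p+1} ∘ ⋯ ∘ d_{p+i} : U_{p+i} → U_p`. -/
def dTopIter (U : CategoryTheory.SimplicialObject A) (p : ℕ) :
    (i : ℕ) → (ob U (p + i) ⟶ ob U p)
  | 0 => 𝟙 _
  | (i + 1) => U.δ (Fin.last (p + i + 1)) ≫ dTopIter U p i

/-- The iterated bottom face map `d_0 ∘ ⋯ ∘ d_0 : U_{q+i} → U_q`. -/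
def dBotIter (U : CategoryTheory.SimplicialObject A) (q : ℕ) :
    (i : ℕ) → (ob U (q + i) ⟶ ob U q)
  | 0 => 𝟙 _
  | (i + 1) => U.δ (0 : Fin (q + i + 2)) ≫ dBotIter U q i

/-- The `(p,q)`-component of the Alexander–Whitney map
`AW : C_*(U ⊗ V) → C_*(U) ⊗ C_*(V)` in degree `n = p + q`:
`(d_{p+1} ∘ ⋯ ∘ d_n) ⊗ (d_0 ∘ ⋯ ∘ d_0) : U_n ⊗ V_n → U_p ⊗ V_q`. -/
def AWcomp (U V : CategoryTheory.SimplicialObject A) (n p q : ℕ) (h : p + q = n) :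
    (ob U n ⊗ ob V n) ⟶ (ob U p ⊗ ob V q) :=
  (eqToHom (show ob U n = ob U (p + q) by rw [h]) ≫ dTopIter U p q) ⊗ₘ
    (eqToHom (show ob V n = ob V (q + p) by rw [Nat.add_comm q p, h]) ≫ dBotIter V q p)

/-- The `(p,q)`-component of the composite of `AW_{U,V}` with the braiding
(with Koszul signs) `C_*(U) ⊗ C_*(V) → C_*(V) ⊗ C_*(U)`. -/
def braidAW (U V : CategoryTheory.SimplicialObject A) (n p q : ℕ) (h : p + q = n) :
    (ob U n ⊗ ob V n) ⟶ (ob V p ⊗ ob U q) :=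
  ((-1 : ℤ) ^ (p * q)) • (AWcomp U V n q p (by omega) ≫ (β_ (ob U q) (ob V p)).hom)

/-- The `(p,q)`-component of the composite of the levelwise braiding
`C_*(τ) : C_*(U ⊗ V) → C_*(V ⊗ U)` with `AW_{V,U}`. -/
def tauAW (U V : CategoryTheory.SimplicialObject A) (n p q : ℕ) (h : p + q = n) :
    (ob U n ⊗ ob V n) ⟶ (ob V p ⊗ ob U q) :=
  (β_ (ob U n) (ob V n)).hom ≫ AWcomp V U n p q h

/-
Both composites restrict `U` and `V` to complementary faces of `Δ[n]` and swap the factors: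
`AW ∘ braiding` sends `U` to the front face `[0, q]` and `V` to the back face `[q, n]`, while
`AW ∘ C_*(τ)` does the opposite. The homotopy is the cup-one (interval-cut) formula: `V` goes to
an interval `[i, i + p]` and `U` to its complement `[0, i] ∪ [i + p, n]`. In the boundary of the
`i`-th cut, the faces interior to the interval or to the complement cancel in pairs, and what
survives is a difference `partialCut (i + 1) - partialCut i`. The sum over `i` telescopes from
`partialCut 0 = C_*(τ) ∘ AW` to `partialCut q`, and the outermost face of the last cut takes
`partialCut q` to `AW ∘ braiding`.

Simplicial operators are written through monotone maps `ℕ → ℕ`, so that all simplicial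
identities reduce to arithmetic in `ℕ`.
-/

namespace AlexanderWhitney

def natSuccAbove (i : ℕ) : ℕ →o ℕ :=
  ⟨fun x => if x < i then x else x + 1, fun a b h => by dsimp only; split_ifs <;> omega⟩

def addNat (k : ℕ) : ℕ →o ℕ :=
  ⟨fun x => x + k, fun _ _ h => Nat.add_le_add_right h k⟩

@[grind =]
lemma natSuccAbove_apply (i x : ℕ) : natSuccAbove i x = if x < i then x else x + 1 := rfl

@[grind =]
lemma addNat_apply (k x : ℕ) : addNat k x = x + k := rfl

@[grind =]
lemma orderHom_comp_apply (g f : ℕ →o ℕ) (x : ℕ) : g.comp f x = g (f x) := rfl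

@[grind =]
lemma orderHom_id_apply (x : ℕ) : (OrderHom.id : ℕ →o ℕ) x = x := rfl

def ofMonotone (l m : ℕ) (f : ℕ →o ℕ) : SimplexCategory.mk l ⟶ SimplexCategory.mk m :=
  SimplexCategory.mkHom
    ⟨fun x => ⟨min m (f x), Nat.lt_succ_of_le (min_le_left _ _)⟩,
      fun _ _ h => min_le_min_left m (f.monotone (Fin.le_def.1 h))⟩

lemma ofMonotone_apply {l m : ℕ} (f : ℕ →o ℕ) (x : Fin (l + 1)) :
    ((ofMonotone l m f).toOrderHom x : ℕ) = min m (f x) := rfl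

lemma simplexHom_ext {l m : ℕ} {f g : SimplexCategory.mk l ⟶ SimplexCategory.mk m}
    (h : ∀ x, (f.toOrderHom x : ℕ) = g.toOrderHom x) : f = g :=
  SimplexCategory.Hom.ext _ _ (OrderHom.ext _ _ (funext fun x => Fin.ext (h x)))

lemma ofMonotone_congr {l m : ℕ} {f g : ℕ →o ℕ} (h : ∀ x ≤ l, f x = g x) :
    ofMonotone l m f = ofMonotone l m g :=
  simplexHom_ext fun x => by rw [ofMonotone_apply, ofMonotone_apply, h x (Nat.le_of_lt_succ x.2)]

lemma ofMonotone_comp {k l m : ℕ} {g : ℕ →o ℕ} (f : ℕ →o ℕ) (hg : ∀ x ≤ k, g x ≤ l) :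
    ofMonotone k l g ≫ ofMonotone l m f = ofMonotone k m (f.comp g) :=
  simplexHom_ext fun x => by
    show min m (f (min l (g x))) = min m (f (g x))
    rw [min_eq_right (hg x (Nat.le_of_lt_succ x.2))]

lemma ofMonotone_id (l : ℕ) : ofMonotone l l OrderHom.id = 𝟙 (SimplexCategory.mk l) :=
  simplexHom_ext fun x => min_eq_right (Nat.le_of_lt_succ x.2)

lemma δ_eq_ofMonotone {l : ℕ} (i : Fin (l + 2)) :
    SimplexCategory.δ i = ofMonotone l (l + 1) (natSuccAbove i) :=
  simplexHom_ext fun x => by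
    show (i.succAbove x : ℕ) = min (l + 1) (if (x : ℕ) < i then x else x + 1)
    have hx : (x : ℕ) ≤ l := Nat.le_of_lt_succ x.2
    rcases lt_or_ge x.castSucc i with h | h
    · rw [Fin.succAbove_of_castSucc_lt _ _ h, Fin.val_castSucc,
        if_pos (show (x : ℕ) < i from Fin.lt_def.1 h)]
      omega
    · rw [Fin.succAbove_of_le_castSucc _ _ h, Fin.val_succ,
        if_neg (show ¬ (x : ℕ) < i from not_lt.2 (Fin.le_def.1 h))]
      omega

section Simplicial

variable {C : Type*} [Category C] (X : SimplicialObject C)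

lemma δ_comp_map_ofMonotone {q n : ℕ} {f : ℕ →o ℕ} (hf : ∀ x ≤ q, f x ≤ n) (k : Fin (n + 2)) :
    X.δ k ≫ X.map (ofMonotone q n f).op =
      X.map (ofMonotone q (n + 1) ((natSuccAbove k).comp f)).op := by
  rw [SimplicialObject.δ, ← X.map_comp, ← op_comp, δ_eq_ofMonotone, ofMonotone_comp _ hf]

lemma dTopIter_eq (p : ℕ) : ∀ i, dTopIter X p i = X.map (ofMonotone p (p + i) OrderHom.id).op
  | 0 => by
    show 𝟙 (ob X p) = X.map (ofMonotone p p OrderHom.id).op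
    rw [ofMonotone_id, op_id, X.map_id]
  | i + 1 => by
    show X.δ (Fin.last (p + i + 1)) ≫ dTopIter X p i = _
    rw [dTopIter_eq p i, δ_comp_map_ofMonotone X fun x hx => by grind]
    exact congrArg (fun f => X.map (Quiver.Hom.op f)) (ofMonotone_congr fun x hx => by grind)

lemma dBotIter_eq (q : ℕ) : ∀ i, dBotIter X q i = X.map (ofMonotone q (q + i) (addNat i)).op
  | 0 => by
    show 𝟙 (ob X q) = X.map (ofMonotone q q OrderHom.id).op
    rw [ofMonotone_id, op_id, X.map_id]
  | i + 1 => by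
    show X.δ (0 : Fin (q + i + 2)) ≫ dBotIter X q i = _
    rw [dBotIter_eq q i, δ_comp_map_ofMonotone X fun x hx => by grind]
    exact congrArg (fun f => X.map (Quiver.Hom.op f)) (ofMonotone_congr fun x hx => by grind)

lemma eqToHom_comp_map_ofMonotone {a b l : ℕ} (e : a = b) (f : ℕ →o ℕ)
    (h : ob X b = ob X a) :
    eqToHom h ≫ X.map (ofMonotone l a f).op = X.map (ofMonotone l b f).op := by
  subst e
  rw [eqToHom_refl, Category.id_comp]

lemma map_ofMonotone_comp_objD [Preadditive C] {p m : ℕ} (f : ℕ →o ℕ) :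
    X.map (ofMonotone (p + 1) m f).op ≫ objD X p =
      ∑ j ∈ Finset.range (p + 2),
        (-1 : ℤ) ^ j • X.map (ofMonotone p m (f.comp (natSuccAbove j))).op := by
  rw [objD, Preadditive.comp_sum, ← Fin.sum_univ_eq_sum_range]
  refine Finset.sum_congr rfl fun j _ => ?_
  rw [Preadditive.comp_zsmul, SimplicialObject.δ, ← X.map_comp, ← op_comp, δ_eq_ofMonotone,
    ofMonotone_comp _ fun x hx => by grind]

end Simplicial

section Monoidal

variable {C : Type*} [Category C] [Preadditive C] [MonoidalCategory C] [MonoidalPreadditive C]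

lemma tensorHom_zsmul {P Q R S : C} (f : P ⟶ Q) (g : R ⟶ S) (c : ℤ) :
    f ⊗ₘ (c • g) = c • (f ⊗ₘ g) := by
  rw [MonoidalCategory.tensorHom_def, MonoidalCategory.tensorHom_def,
    show Q ◁ (c • g) = (tensorLeft Q).map (c • g) from rfl, Functor.map_zsmul,
    Preadditive.comp_zsmul]
  rfl

lemma zsmul_tensorHom {P Q R S : C} (f : P ⟶ Q) (g : R ⟶ S) (c : ℤ) :
    (c • f) ⊗ₘ g = c • (f ⊗ₘ g) := by
  rw [MonoidalCategory.tensorHom_def, MonoidalCategory.tensorHom_def,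
    show (c • f) ▷ R = (tensorRight R).map (c • f) from rfl, Functor.map_zsmul,
    Preadditive.zsmul_comp]
  rfl

end Monoidal

section Braided

variable {C : Type*} [Category C] [MonoidalCategory C] [BraidedCategory C]
  (U V : SimplicialObject C)

def braidedMap (m p q : ℕ) (f g : ℕ →o ℕ) : (ob U m ⊗ ob V m) ⟶ (ob V p ⊗ ob U q) :=
  (U.map (ofMonotone q m f).op ⊗ₘ V.map (ofMonotone p m g).op) ≫ (β_ (ob U q) (ob V p)).hom

variable {U V}

lemma braidedMap_congr {m p q : ℕ} {f f' g g' : ℕ →o ℕ} (hf : ∀ x ≤ q, f x = f' x)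
    (hg : ∀ x ≤ p, g x = g' x) : braidedMap U V m p q f g = braidedMap U V m p q f' g' := by
  rw [braidedMap, ofMonotone_congr hf, ofMonotone_congr hg, braidedMap]

variable [Preadditive C]

lemma objD_comp_braidedMap (n p q : ℕ) {f g : ℕ →o ℕ} (hf : ∀ x ≤ q, f x ≤ n)
    (hg : ∀ x ≤ p, g x ≤ n) :
    (objD (tensS U V) n ≫ braidedMap U V n p q f g :
      (ob U (n + 1) ⊗ ob V (n + 1)) ⟶ (ob V p ⊗ ob U q)) =
      ∑ k ∈ Finset.range (n + 2), (-1 : ℤ) ^ k •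
        braidedMap U V (n + 1) p q ((natSuccAbove k).comp f) ((natSuccAbove k).comp g) := by
  erw [objD, Preadditive.sum_comp, ← Fin.sum_univ_eq_sum_range]
  refine Finset.sum_congr rfl fun k _ => ?_
  erw [Preadditive.zsmul_comp]
  congr 1
  show (U.δ k ⊗ₘ V.δ k) ≫ braidedMap U V n p q f g = _
  rw [braidedMap, ← Category.assoc, tensorHom_comp_tensorHom, δ_comp_map_ofMonotone U hf,
    δ_comp_map_ofMonotone V hg, braidedMap]

lemma smul_braidedMap_eq {m p q a b : ℕ} {f f' g g' : ℕ →o ℕ} (hab : Even (a + b))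
    (hf : ∀ x ≤ q, f x = f' x) (hg : ∀ x ≤ p, g x = g' x) :
    (-1 : ℤ) ^ a • braidedMap U V m p q f g = (-1 : ℤ) ^ b • braidedMap U V m p q f' g' := by
  rw [braidedMap_congr hf hg, neg_one_pow_congr (Nat.even_add.1 hab)]

lemma smul_braidedMap_add_smul_braidedMap {m p q a b : ℕ} {f f' g g' : ℕ →o ℕ}
    (hab : Odd (a + b)) (hf : ∀ x ≤ q, f x = f' x) (hg : ∀ x ≤ p, g x = g' x) :
    (-1 : ℤ) ^ a • braidedMap U V m p q f g + (-1 : ℤ) ^ b • braidedMap U V m p q f' g' = 0 := by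
  have hab' : Even (b + (a + 1)) := by
    rwa [← add_assoc, add_comm b, Nat.even_add_one, Nat.not_even_iff_odd]
  rw [smul_braidedMap_eq hab' (fun x hx => (hf x hx).symm) (fun x hx => (hg x hx).symm), pow_succ,
    mul_neg_one, neg_smul, add_neg_cancel]

variable [MonoidalPreadditive C]

lemma braidedMap_comp_objD_tensorHom_id (m p q : ℕ) (f g : ℕ →o ℕ) :
    braidedMap U V m (p + 1) q f g ≫ (objD V p ⊗ₘ 𝟙 (ob U q)) =
      ∑ j ∈ Finset.range (p + 2),
        (-1 : ℤ) ^ j • braidedMap U V m p q f (g.comp (natSuccAbove j)) := by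
  rw [braidedMap, Category.assoc, ← BraidedCategory.braiding_naturality, ← Category.assoc,
    tensorHom_comp_tensorHom, Category.comp_id, map_ofMonotone_comp_objD, tensor_sum,
    Preadditive.sum_comp]
  simp only [tensorHom_zsmul, Preadditive.zsmul_comp, braidedMap]

lemma braidedMap_comp_id_tensorHom_objD (m p q : ℕ) (f g : ℕ →o ℕ) :
    braidedMap U V m p (q + 1) f g ≫ (𝟙 (ob V p) ⊗ₘ objD U q) =
      ∑ j ∈ Finset.range (q + 2),
        (-1 : ℤ) ^ j • braidedMap U V m p q (f.comp (natSuccAbove j)) g := by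
  rw [braidedMap, Category.assoc, ← BraidedCategory.braiding_naturality, ← Category.assoc,
    tensorHom_comp_tensorHom, Category.comp_id, map_ofMonotone_comp_objD, sum_tensor,
    Preadditive.sum_comp]
  simp only [zsmul_tensorHom, Preadditive.zsmul_comp, braidedMap]

end Braided

section AlexanderWhitneyMap

variable {C : Type*} [Category C] [MonoidalCategory C] (U V : SimplicialObject C)

lemma AWcomp_eq (n p q : ℕ) (h : p + q = n) :
    AWcomp U V n p q h =
      U.map (ofMonotone p n OrderHom.id).op ⊗ₘ V.map (ofMonotone q n (addNat p)).op := by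
  rw [AWcomp, dTopIter_eq, dBotIter_eq, eqToHom_comp_map_ofMonotone U h,
    eqToHom_comp_map_ofMonotone V (by omega)]

lemma tauAW_eq [SymmetricCategory C] (m p q : ℕ) (h : p + q = m) :
    tauAW U V m p q h = braidedMap U V m p q (addNat p) OrderHom.id := by
  rw [tauAW, AWcomp_eq, ← BraidedCategory.braiding_naturality, braidedMap]

lemma braidAW_eq [Abelian C] [SymmetricCategory C] (m p q : ℕ) (h : p + q = m) :
    braidAW U V m p q h = (-1 : ℤ) ^ (p * q) • braidedMap U V m p q OrderHom.id (addNat q) := by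
  rw [braidAW, AWcomp_eq, braidedMap]

end AlexanderWhitneyMap

/-- Together with `addNat i : [p] → [q + p - 1]`, this cuts `[q + p - 1]` into the interval
`[i, i + p]` and its complement `[0, i] ∪ [i + p, q + p - 1]`. -/
def intervalCut (p i : ℕ) : ℕ →o ℕ :=
  ⟨fun x => if x ≤ i then x else x + p - 1, fun a b h => by dsimp only; split_ifs <;> omega⟩

/-- Sends `[q]` onto `[0, k] ∪ [k + p, q + p]` minus the vertex `j`, while `addNat k` sends `[p]`
onto `[k, k + p]`. -/
def partialCutFun (p k j : ℕ) : ℕ →o ℕ :=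
  ⟨fun x => if x < j then x else if x < k then x + 1 else x + p,
    fun a b h => by dsimp only; split_ifs <;> omega⟩

@[grind =]
lemma intervalCut_apply (p i x : ℕ) : intervalCut p i x = if x ≤ i then x else x + p - 1 := rfl

@[grind =]
lemma partialCutFun_apply (p k j x : ℕ) :
    partialCutFun p k j x = if x < j then x else if x < k then x + 1 else x + p := rfl

section Homotopy

variable {C : Type*} [Category C] [Preadditive C] [MonoidalCategory C] [BraidedCategory C]
  (U V : SimplicialObject C)

def cutMap (m p q i : ℕ) : (ob U m ⊗ ob V m) ⟶ (ob V p ⊗ ob U q) :=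
  braidedMap U V m p q (intervalCut p i) (addNat i)

def homotopy (n p q : ℕ) : (ob U n ⊗ ob V n) ⟶ (ob V p ⊗ ob U q) :=
  ∑ i ∈ Finset.range q, (-1 : ℤ) ^ ((p + 1) * (i + 1)) • cutMap U V n p q i

def partialCut (m p q k : ℕ) : (ob U m ⊗ ob V m) ⟶ (ob V p ⊗ ob U q) :=
  ∑ j ∈ Finset.range (k + 1),
    (-1 : ℤ) ^ ((p + 1) * k + j) • braidedMap U V m p q (partialCutFun p k j) (addNat k)

variable {U V}

lemma homotopy_comp {n p q : ℕ} {Z : C} (φ : ob V p ⊗ ob U q ⟶ Z) :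
    homotopy U V n p q ≫ φ =
      ∑ i ∈ Finset.range q, (-1 : ℤ) ^ ((p + 1) * (i + 1)) • (cutMap U V n p q i ≫ φ) := by
  simp only [homotopy, Preadditive.sum_comp, Preadditive.zsmul_comp]

lemma objD_comp_homotopy (n p q : ℕ) :
    (objD (tensS U V) n ≫ homotopy U V n p q : (ob U (n + 1) ⊗ ob V (n + 1)) ⟶ (ob V p ⊗ ob U q)) =
      ∑ i ∈ Finset.range q, (-1 : ℤ) ^ ((p + 1) * (i + 1)) •
        (objD (tensS U V) n ≫ cutMap U V n p q i :
          (ob U (n + 1) ⊗ ob V (n + 1)) ⟶ (ob V p ⊗ ob U q)) :=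
  (Preadditive.comp_sum _ _ _).trans (Finset.sum_congr rfl fun _ _ => Preadditive.comp_zsmul _ _ _)

lemma partialCut_zero (m p q : ℕ) :
    partialCut U V m p q 0 = braidedMap U V m p q (addNat p) OrderHom.id := by
  rw [partialCut, Finset.sum_range_one, mul_zero, pow_zero, one_smul]
  exact braidedMap_congr (fun x _ => by grind) (fun x _ => by grind)

lemma partialCut_succ (m p q i : ℕ) :
    partialCut U V m p q (i + 1) =
      ∑ k ∈ Finset.range (i + 1), (-1 : ℤ) ^ ((p + 1) * (i + 1) + k) • braidedMap U V m p q
          ((natSuccAbove k).comp (intervalCut p i)) ((natSuccAbove k).comp (addNat i)) +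
        (-1 : ℤ) ^ ((p + 1 + 1) * (i + 1)) • braidedMap U V m p q
          (intervalCut (p + 1) i) ((addNat i).comp (natSuccAbove 0)) := by
  rw [partialCut, Finset.sum_range_succ]
  refine congrArg₂ (· + ·) (Finset.sum_congr rfl fun k hk => ?_) ?_
  · have := Finset.mem_range.1 hk
    exact smul_braidedMap_eq (by grind) (fun x _ => by grind) (fun x _ => by grind)
  · exact smul_braidedMap_eq (by grind) (fun x _ => by grind) (fun x _ => by grind)

lemma partialCut_eq_neg_sum (m p q i : ℕ) :
    partialCut U V m p q i =
      -∑ j ∈ Finset.range (i + 1), (-1 : ℤ) ^ (p + (p + 1) * (i + 1) + j) •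
        braidedMap U V m p q ((intervalCut p i).comp (natSuccAbove j)) (addNat i) := by
  rw [partialCut, ← Finset.sum_neg_distrib]
  refine Finset.sum_congr rfl fun j hj => eq_neg_of_add_eq_zero_left ?_
  have := Finset.mem_range.1 hj
  exact smul_braidedMap_add_smul_braidedMap (by grind) (fun x _ => by grind)
    (fun x _ => by grind)

variable [MonoidalPreadditive C]

lemma boundary_cutMap {n p q i : ℕ} (h : p + q = n + 1) (hi : i < q) :
    (-1 : ℤ) ^ ((p + 1 + 1) * (i + 1)) •
        (cutMap U V (n + 1) (p + 1) q i ≫ (objD V p ⊗ₘ 𝟙 (ob U q))) +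
      (-1 : ℤ) ^ (p + (p + 1) * (i + 1)) •
        (cutMap U V (n + 1) p (q + 1) i ≫ (𝟙 (ob V p) ⊗ₘ objD U q)) +
      (-1 : ℤ) ^ ((p + 1) * (i + 1)) • (objD (tensS U V) n ≫ cutMap U V n p q i :
        (ob U (n + 1) ⊗ ob V (n + 1)) ⟶ (ob V p ⊗ ob U q)) =
    partialCut U V (n + 1) p q (i + 1) - partialCut U V (n + 1) p q i := by
  -- `F₁`, `F₂`, `F₃` are the signed faces of the interval, of its complement and of the simplex.
  -- Interior faces of the interval (`c₁`) and of the back part of the complement (`c₂`) are also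
  -- faces of the simplex; the back face of the interval is the face of the complement dropping
  -- `i + p` (`c₃`).
  let T := braidedMap U V (n + 1) p q
  let F₁ (j : ℕ) := (-1 : ℤ) ^ ((p + 1 + 1) * (i + 1) + j) •
    T (intervalCut (p + 1) i) ((addNat i).comp (natSuccAbove j))
  let F₂ (j : ℕ) := (-1 : ℤ) ^ (p + (p + 1) * (i + 1) + j) •
    T ((intervalCut p i).comp (natSuccAbove j)) (addNat i)
  let F₃ (k : ℕ) := (-1 : ℤ) ^ ((p + 1) * (i + 1) + k) •
    T ((natSuccAbove k).comp (intervalCut p i)) ((natSuccAbove k).comp (addNat i))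
  have c₁ : ∑ t ∈ Finset.range p, F₁ (1 + t) + ∑ t ∈ Finset.range p, F₃ (i + 1 + t) = 0 := by
    rw [← Finset.sum_add_distrib]
    exact Finset.sum_eq_zero fun t _ => smul_braidedMap_add_smul_braidedMap (by grind)
      (fun x _ => by grind) (fun x _ => by grind)
  have c₂ : ∑ t ∈ Finset.range (q - i), F₂ (i + 1 + 1 + t) +
      ∑ t ∈ Finset.range (q - i), F₃ (i + 1 + p + t) = 0 := by
    rw [← Finset.sum_add_distrib]
    exact Finset.sum_eq_zero fun t _ => smul_braidedMap_add_smul_braidedMap (by grind)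
      (fun x _ => by grind) (fun x _ => by grind)
  have c₃ : F₁ (1 + p) + F₂ (i + 1) = 0 :=
    smul_braidedMap_add_smul_braidedMap (by grind) (fun x _ => by grind) (fun x _ => by grind)
  have hW₁ : partialCut U V (n + 1) p q (i + 1) = ∑ k ∈ Finset.range (i + 1), F₃ k + F₁ 0 :=
    partialCut_succ (n + 1) p q i
  have hW₀ : partialCut U V (n + 1) p q i = -∑ j ∈ Finset.range (i + 1), F₂ j :=
    partialCut_eq_neg_sum (n + 1) p q i
  calc
    _ = ∑ j ∈ Finset.range (1 + p + 1), F₁ j +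
        ∑ j ∈ Finset.range (i + 1 + 1 + (q - i)), F₂ j +
        ∑ k ∈ Finset.range (i + 1 + p + (q - i)), F₃ k := by
      rw [cutMap, cutMap, cutMap, braidedMap_comp_objD_tensorHom_id,
        braidedMap_comp_id_tensorHom_objD,
        objD_comp_braidedMap n p q (fun x _ => by grind) (fun x _ => by grind),
        show 1 + p + 1 = p + 2 by omega, show i + 1 + 1 + (q - i) = q + 2 by omega,
        show i + 1 + p + (q - i) = n + 2 by omega]
      simp only [Finset.smul_sum, smul_smul, ← pow_add]
      rfl
    _ = _ := by
      rw [Finset.sum_range_succ F₁, Finset.sum_range_add F₁ 1 p,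
        Finset.sum_range_add F₂ (i + 1 + 1) (q - i), Finset.sum_range_succ F₂ (i + 1),
        Finset.sum_range_add F₃ (i + 1 + p) (q - i), Finset.sum_range_add F₃ (i + 1) p,
        Finset.sum_range_one]
      linear_combination (norm := module) c₁ + c₂ + c₃ - hW₁ + hW₀

lemma boundary_cutMap_last (m p q : ℕ) :
    (-1 : ℤ) ^ (p + (p + 1) * (q + 1)) • (cutMap U V m p (q + 1) q ≫ (𝟙 (ob V p) ⊗ₘ objD U q)) =
      (-1 : ℤ) ^ (p * q) • braidedMap U V m p q OrderHom.id (addNat q) - partialCut U V m p q q := by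
  rw [cutMap, braidedMap_comp_id_tensorHom_objD, Finset.smul_sum, Finset.sum_range_succ,
    partialCut_eq_neg_sum, sub_neg_eq_add, add_comm (_ • braidedMap U V m p q OrderHom.id _)]
  simp only [smul_smul, ← pow_add]
  congr 1
  exact smul_braidedMap_eq (by grind) (fun x _ => by grind) (fun x _ => by grind)

end Homotopy

section Symmetric

variable {C : Type*} [Category C] [Abelian C] [MonoidalCategory C] [SymmetricCategory C]
  [MonoidalPreadditive C] (U V : SimplicialObject C)

lemma braidAW_eq_tauAW_add_homotopy_zero (p q : ℕ) (h : p + q = 0) :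
    braidAW U V 0 p q h = tauAW U V 0 p q h +
      (homotopy U V 0 (p + 1) q ≫ (objD V p ⊗ₘ 𝟙 (ob U q))) +
      (-1 : ℤ) ^ p • (homotopy U V 0 p (q + 1) ≫ (𝟙 (ob V p) ⊗ₘ objD U q)) := by
  obtain ⟨rfl, rfl⟩ : p = 0 ∧ q = 0 := by omega
  rw [homotopy_comp, homotopy_comp, Finset.sum_range_zero, Finset.sum_range_one, smul_smul,
    ← pow_add, boundary_cutMap_last, braidAW_eq, tauAW_eq, ← partialCut_zero]
  abel

lemma braidAW_eq_tauAW_add_homotopy_succ (n p q : ℕ) (h : p + q = n + 1) :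
    braidAW U V (n + 1) p q h = tauAW U V (n + 1) p q h +
      (homotopy U V (n + 1) (p + 1) q ≫ (objD V p ⊗ₘ 𝟙 (ob U q))) +
      (-1 : ℤ) ^ p • (homotopy U V (n + 1) p (q + 1) ≫ (𝟙 (ob V p) ⊗ₘ objD U q)) +
      (objD (tensS U V) n ≫ homotopy U V n p q :
        (ob U (n + 1) ⊗ ob V (n + 1)) ⟶ (ob V p ⊗ ob U q)) := by
  have telescope := Finset.sum_range_sub (partialCut U V (n + 1) p q) q
  rw [← Finset.sum_congr rfl fun i hi => boundary_cutMap h (Finset.mem_range.1 hi),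
    Finset.sum_add_distrib, Finset.sum_add_distrib] at telescope
  rw [homotopy_comp, homotopy_comp, objD_comp_homotopy, Finset.smul_sum, Finset.sum_range_succ,
    smul_smul, ← pow_add, boundary_cutMap_last, braidAW_eq, tauAW_eq, ← partialCut_zero]
  simp only [smul_smul, ← pow_add]
  linear_combination (norm := module) -telescope

end Symmetric

end AlexanderWhitney

/-- **The Alexander–Whitney map commutes with the braiding up to chain
homotopy**: for simplicial objects `U`, `V` in a symmetric monoidal abelian
category whose tensor product is additive in each variable, the composite of
`AW_{U,V}` with the braiding of chain complexes is chain homotopic to the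
composite of `C_*(τ)` with `AW_{V,U}`.  The homotopy `s` and all maps into the
tensor product `C_*(V) ⊗ C_*(U)` of chain complexes are recorded by their
components into the bidegree summands `V_p ⊗ U_q`, and the differential of
that tensor product carries the Koszul sign `(-1)^p` on `id ⊗ d`. -/
theorem alexander_whitney_braiding_homotopy (U V : CategoryTheory.SimplicialObject A) :
    ∃ s : (n p q : ℕ) → p + q = n + 1 → ((ob U n ⊗ ob V n) ⟶ (ob V p ⊗ ob U q)),
      (∀ (p q : ℕ) (h : p + q = 0),
        braidAW U V 0 p q h = tauAW U V 0 p q h +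
          (s 0 (p + 1) q (by omega) ≫ (objD V p ⊗ₘ 𝟙 (ob U q))) +
          ((-1 : ℤ) ^ p) • (s 0 p (q + 1) (by omega) ≫ (𝟙 (ob V p) ⊗ₘ objD U q))) ∧
      (∀ (n p q : ℕ) (h : p + q = n + 1),
        braidAW U V (n + 1) p q h = tauAW U V (n + 1) p q h +
          (s (n + 1) (p + 1) q (by omega) ≫ (objD V p ⊗ₘ 𝟙 (ob U q))) +
          ((-1 : ℤ) ^ p) • (s (n + 1) p (q + 1) (by omega) ≫ (𝟙 (ob V p) ⊗ₘ objD U q)) +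
          ((objD (tensS U V) n ≫ s n p q h :
            (ob U (n + 1) ⊗ ob V (n + 1)) ⟶ (ob V p ⊗ ob U q)))) :=
  ⟨fun n p q _ => AlexanderWhitney.homotopy U V n p q,
    AlexanderWhitney.braidAW_eq_tauAW_add_homotopy_zero U V,
    AlexanderWhitney.braidAW_eq_tauAW_add_homotopy_succ U V⟩

end
end
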